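/- arXiv:2502.02516 — 8 statements merged into one kernel-verified Lean document; each statement's English description precedes it below -/
import Mathlib

section
/- For any states s, s', the asymmetry of the one-step value deviation is bounded: |ρ_r^π(s,s') − ρ_r^π(s',s)| ≤ |r(s) − r(s')| + ((1+γ)/2)‖P^π(·|s) − P^π(·|s')‖₁ · sp(V_r^π). -/
open Finset

/-- Centring `V` at the midpoint of its range costs nothing against weights of total mass zero,
and then every deviation `|V i - c|` is at most half the span. -/
theorem abs_sum_mul_le_of_sum_eq_zero {ι : Type*} [Fintype ι] {w V : ι → ℝ}
    (hw : ∑ i, w i = 0) :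
    |∑ i, w i * V i| ≤ (∑ i, |w i|) / 2 * ((⨆ i, V i) - ⨅ i, V i) := by
  set M := ⨆ i, V i
  set m := ⨅ i, V i
  have hdev : ∀ i, |V i - (M + m) / 2| ≤ (M - m) / 2 := fun i => by
    have hM : V i ≤ M := le_ciSup (Set.finite_range V).bddAbove i
    have hm : m ≤ V i := ciInf_le (Set.finite_range V).bddBelow i
    rw [abs_le]
    constructor <;> linarith
  have hcentre : ∑ i, w i * V i = ∑ i, w i * (V i - (M + m) / 2) := by
    simp only [mul_sub, sum_sub_distrib, ← sum_mul, hw, zero_mul, sub_zero]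
  calc |∑ i, w i * V i|
      ≤ ∑ i, |w i| * |V i - (M + m) / 2| := by
        rw [hcentre]
        simpa only [abs_mul] using abs_sum_le_sum_abs (fun i => w i * (V i - (M + m) / 2)) univ
    _ ≤ ∑ i, |w i| * ((M - m) / 2) :=
        sum_le_sum fun i _ => mul_le_mul_of_nonneg_left (hdev i) (abs_nonneg _)
    _ = (∑ i, |w i|) / 2 * (M - m) := by rw [← sum_mul]; ring

theorem one_step_deviation_asymmetry_general
    {S : Type*} [Fintype S]
    (P : S → S → ℝ) (r : S → ℝ) (V : S → ℝ) (γ : ℝ)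
    (hγ : γ ∈ Set.Ioo (0:ℝ) 1)
    (hPsum : ∀ s, ∑ s', P s s' = 1)
    (hBell : ∀ s, V s = r s + γ * ∑ s', P s s' * V s') :
    ∀ s s' : S,
      |(V s' - ∑ z, P s z * V z) - (V s - ∑ z, P s' z * V z)| ≤
        |r s - r s'| +
          ((1 + γ) / 2) * (∑ z, |P s z - P s' z|) * ((⨆ t, V t) - (⨅ t, V t)) := by
  intro s s'
  set A := ∑ z, P s z * V z
  set B := ∑ z, P s' z * V z
  have hAB : |A - B| ≤ (∑ z, |P s z - P s' z|) / 2 * ((⨆ t, V t) - ⨅ t, V t) := by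
    have h := abs_sum_mul_le_of_sum_eq_zero (w := fun z => P s z - P s' z) (V := V)
      (by rw [sum_sub_distrib, hPsum, hPsum, sub_self])
    simpa only [sub_mul, sum_sub_distrib] using h
  have hsplit : (V s' - A) - (V s - B) = (r s' - r s) - (1 + γ) * (A - B) := by
    rw [hBell s, hBell s']; ring
  have hγ' : 0 ≤ 1 + γ := by linarith [hγ.1]
  calc |(V s' - A) - (V s - B)|
      ≤ |r s - r s'| + (1 + γ) * |A - B| := by
        rw [hsplit]
        refine (abs_sub (r s' - r s) ((1 + γ) * (A - B))).trans_eq ?_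
        rw [abs_mul, abs_of_nonneg hγ', abs_sub_comm]
    _ ≤ |r s - r s'| + ((1 + γ) / 2) * (∑ z, |P s z - P s' z|) * ((⨆ t, V t) - ⨅ t, V t) := by
        linarith [mul_le_mul_of_nonneg_left hAB hγ']

/-- Asymmetry of the one-step value deviation:
`|ρ(s,s') − ρ(s',s)| ≤ |r s − r s'| + ((1+γ)/2)‖P(·|s) − P(·|s')‖₁ · sp(V)`. -/
theorem one_step_deviation_asymmetry
    {S : Type*} [Fintype S] [Nonempty S]
    (P : S → S → ℝ) (r : S → ℝ) (V : S → ℝ) (γ : ℝ)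
    (hγ : γ ∈ Set.Ioo (0:ℝ) 1)
    (hPnn : ∀ s s', 0 ≤ P s s') (hPsum : ∀ s, ∑ s', P s s' = 1)
    (hr : ∀ s, r s ∈ Set.Icc (0:ℝ) 1)
    (hBell : ∀ s, V s = r s + γ * ∑ s', P s s' * V s') :
    ∀ s s' : S,
      |(V s' - ∑ z, P s z * V z) - (V s - ∑ z, P s' z * V z)| ≤
        |r s - r s'| +
          ((1 + γ) / 2) * (∑ z, |P s z - P s' z|) * ((⨆ t, V t) - (⨅ t, V t)) :=
  one_step_deviation_asymmetry_general P r V γ hγ hPsum hBell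
end

section
/- The set of reward vectors r for which the one-step value deviation matrix ρ_r^π is identically zero (i.e., ρ_r^π(s,s') = 0 for all s, s') is exactly the set of constant vectors {α·𝟏 : α ∈ ℝ}. -/
/-!
The one-step deviation `V s' - (P V) s` vanishes for all `s, s'` exactly when the value vector
`V = (1 - γP)⁻¹ r` is constant, because a stochastic `P` fixes constant vectors. The same fact
makes `1 - γP` act on constants as multiplication by `1 - γ ≠ 0`, and `1 - γP` is invertible
(strictly diagonally dominant for `|γ| < 1`), so `V` is constant iff `r` is.
-/

open Matrix

theorem exists_eq_const_of_forall_eq {S α : Type*} {f : S → α} [Nonempty α]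
    (h : ∀ s t, f s = f t) : ∃ a, f = fun _ => a := by
  rcases isEmpty_or_nonempty S with hS | ⟨⟨s₀⟩⟩
  · exact ⟨Classical.arbitrary α, funext hS.elim⟩
  · exact ⟨f s₀, funext fun s => h s s₀⟩

section

variable {S R : Type*} [Fintype S]

theorem Matrix.mulVec_const_of_sum_row_eq_one [NonAssocSemiring R] {P : Matrix S S R}
    (hP : ∀ s, ∑ s', P s s' = 1) (c : R) : P *ᵥ (fun _ => c) = fun _ => c := by
  funext s
  simp only [mulVec, dotProduct, ← Finset.sum_mul, hP s, one_mul]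

theorem Matrix.one_sub_smul_mulVec_const [CommRing R] [DecidableEq S] {P : Matrix S S R}
    (hP : ∀ s, ∑ s', P s s' = 1) (γ c : R) :
    (1 - γ • P) *ᵥ (fun _ => c) = fun _ => (1 - γ) * c := by
  funext s
  simp only [sub_mulVec, one_mulVec, smul_mulVec, mulVec_const_of_sum_row_eq_one hP,
    Pi.sub_apply, Pi.smul_apply, smul_eq_mul]
  ring

theorem Matrix.isUnit_det_one_sub_smul [DecidableEq S] {P : Matrix S S ℝ}
    (hPnn : ∀ s s', 0 ≤ P s s') (hPsum : ∀ s, ∑ s', P s s' ≤ 1) {γ : ℝ} (hγ : |γ| < 1) :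
    IsUnit (1 - γ • P).det := by
  refine (det_ne_zero_of_sum_row_lt_diag fun k => ?_).isUnit
  have off_diag : ∀ j ∈ Finset.univ.erase k, ‖(1 - γ • P) k j‖ = |γ| * P k j := fun j hj => by
    simp [one_apply_ne (Finset.ne_of_mem_erase hj).symm, abs_of_nonneg (hPnn k j)]
  have row_rest : ∑ j ∈ Finset.univ.erase k, P k j ≤ 1 - P k k := by
    rw [Finset.sum_erase_eq_sub (Finset.mem_univ k)]
    linarith [hPsum k]
  have diag : 1 - |γ| * P k k ≤ ‖(1 - γ • P) k k‖ := by
    simpa [abs_mul, abs_of_nonneg (hPnn k k)] using abs_sub_abs_le_abs_sub 1 (γ * P k k)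
  rw [Finset.sum_congr rfl off_diag, ← Finset.mul_sum]
  nlinarith [abs_nonneg γ]

theorem Matrix.inv_mulVec_eq_iff [CommRing R] [DecidableEq S] {A : Matrix S S R}
    (hA : IsUnit A.det) {u v : S → R} : A⁻¹ *ᵥ u = v ↔ u = A *ᵥ v := by
  constructor <;> rintro rfl
  · rw [mulVec_mulVec, mul_nonsing_inv A hA, one_mulVec]
  · rw [mulVec_mulVec, nonsing_inv_mul A hA, one_mulVec]

theorem forall_sub_mulVec_eq_zero_iff [Ring R] {P : Matrix S S R} (hP : ∀ s, ∑ s', P s s' = 1)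
    (V : S → R) : (∀ s s', V s' - (P *ᵥ V) s = 0) ↔ ∃ c, V = fun _ => c := by
  simp only [sub_eq_zero]
  constructor
  · intro h
    exact exists_eq_const_of_forall_eq fun s t => (h s s).trans (h s t).symm
  · rintro ⟨c, rfl⟩ s s'
    rw [mulVec_const_of_sum_row_eq_one hP]

theorem exists_inv_mulVec_eq_const_iff [Field R] [DecidableEq S] {A : Matrix S S R}
    (hA : IsUnit A.det) {k : R} (hk : k ≠ 0) (hconst : ∀ c, A *ᵥ (fun _ => c) = fun _ => k * c)
    (r : S → R) :
    (∃ c, A⁻¹ *ᵥ r = fun _ => c) ↔ ∃ α, r = fun _ => α := by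
  simp only [inv_mulVec_eq_iff hA, hconst]
  constructor
  · rintro ⟨c, hc⟩
    exact ⟨k * c, hc⟩
  · rintro ⟨α, hα⟩
    exact ⟨α / k, by rw [hα, mul_div_cancel₀ α hk]⟩

end

theorem deviation_matrix_zero_iff_constant_reward_general
    {S : Type*} [Fintype S] [DecidableEq S]
    (P : Matrix S S ℝ) (γ : ℝ) (hγ : γ ∈ Set.Ioo (0:ℝ) 1)
    (hPnn : ∀ s s', 0 ≤ P s s') (hPsum : ∀ s, ∑ s', P s s' = 1)
    (r : S → ℝ) :
    (∀ s s' : S,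
        ((1 - γ • P)⁻¹ *ᵥ r) s' - (P *ᵥ ((1 - γ • P)⁻¹ *ᵥ r)) s = 0)
      ↔ ∃ α : ℝ, r = fun _ => α := by
  obtain ⟨hγ0, hγ1⟩ := hγ
  have hunit : IsUnit (1 - γ • P).det :=
    isUnit_det_one_sub_smul hPnn (fun s => (hPsum s).le) (abs_lt.mpr ⟨by linarith, hγ1⟩)
  rw [forall_sub_mulVec_eq_zero_iff hPsum, exists_inv_mulVec_eq_const_iff hunit
    (sub_ne_zero.mpr hγ1.ne') (one_sub_smul_mulVec_const hPsum γ)]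

/-- The one-step value deviation matrix `ρ_r^π` vanishes identically
iff the reward vector `r` is constant. -/
theorem deviation_matrix_zero_iff_constant_reward
    {S : Type*} [Fintype S] [DecidableEq S] [Nonempty S]
    (P : Matrix S S ℝ) (γ : ℝ) (hγ : γ ∈ Set.Ioo (0:ℝ) 1)
    (hPnn : ∀ s s', 0 ≤ P s s') (hPsum : ∀ s, ∑ s', P s s' = 1)
    (r : S → ℝ) :
    (∀ s s' : S,
        ((1 - γ • P)⁻¹ *ᵥ r) s' - (P *ᵥ ((1 - γ • P)⁻¹ *ᵥ r)) s = 0)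
      ↔ ∃ α : ℝ, r = fun _ => α :=
  deviation_matrix_zero_iff_constant_reward_general P γ hγ hPnn hPsum r
end

section
/- ρ_r^π(s,s) = 0 for all states s if and only if r is a right eigenvector of P^π with eigenvalue 1 (i.e., P^π r = r), equivalently r lies in the span of the hitting probability vectors of the closed irreducible recurrent classes of P^π. -/
open Matrix

/-- The matrix `1 - γ • P` is nonsingular for a stochastic `P` and `γ ∈ (0,1)`. -/
lemma aux_isUnit_det
    {S : Type*} [Fintype S] [DecidableEq S] [Nonempty S]
    (P : Matrix S S ℝ) (γ : ℝ) (hγ : γ ∈ Set.Ioo (0:ℝ) 1)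
    (hPnn : ∀ s s', 0 ≤ P s s') (hPsum : ∀ s, ∑ s', P s s' = 1) :
    IsUnit (1 - γ • P).det := by
  obtain ⟨hγ0, hγ1⟩ := hγ
  rw [isUnit_iff_ne_zero]
  intro hdet
  obtain ⟨v, hv0, hv⟩ := (Matrix.exists_mulVec_eq_zero_iff.mpr hdet)
  -- v = γ • (P *ᵥ v)
  have hveq : ∀ s, v s = γ * (P *ᵥ v) s := by
    intro s
    have := congrFun hv s
    simp [Matrix.sub_mulVec, Matrix.one_mulVec, Matrix.smul_mulVec,
      sub_eq_zero] at this
    simpa using this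
  obtain ⟨s, hs⟩ := Finset.exists_max_image Finset.univ (fun s => |v s|)
    ⟨Classical.arbitrary S, Finset.mem_univ _⟩
  obtain ⟨-, hsmax⟩ := hs
  have hvs_pos : 0 < |v s| := by
    rcases Function.ne_iff.mp hv0 with ⟨t, ht⟩
    have := hsmax t (Finset.mem_univ t)
    have : 0 < |v t| := abs_pos.mpr ht
    linarith [hsmax t (Finset.mem_univ t)]
  have hbound : |v s| ≤ γ * |v s| := by
    calc |v s| = γ * |(P *ᵥ v) s| := by
          rw [hveq s, abs_mul, abs_of_pos hγ0]
      _ ≤ γ * |v s| := by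
          apply mul_le_mul_of_nonneg_left _ hγ0.le
          calc |(P *ᵥ v) s| = |∑ t, P s t * v t| := rfl
            _ ≤ ∑ t, |P s t * v t| := Finset.abs_sum_le_sum_abs _ _
            _ ≤ ∑ t, P s t * |v s| := by
                apply Finset.sum_le_sum
                intro t _
                rw [abs_mul, abs_of_nonneg (hPnn s t)]
                exact mul_le_mul_of_nonneg_left (hsmax t (Finset.mem_univ t)) (hPnn s t)
            _ = |v s| := by rw [← Finset.sum_mul, hPsum, one_mul]
  nlinarith

/-- `ρ_r^π(s,s) = 0` for all states `s` iff `r` is a right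
eigenvector of `P^π` with eigenvalue 1, i.e. `P^π r = r`. -/
theorem deviation_diag_zero_iff_eigenvector
    {S : Type*} [Fintype S] [DecidableEq S] [Nonempty S]
    (P : Matrix S S ℝ) (γ : ℝ) (hγ : γ ∈ Set.Ioo (0:ℝ) 1)
    (hPnn : ∀ s s', 0 ≤ P s s') (hPsum : ∀ s, ∑ s', P s s' = 1)
    (r : S → ℝ) (hr : r ≠ 0)
    (V : S → ℝ) (hV : V = (1 - γ • P)⁻¹ *ᵥ r) :
    (∀ s : S, V s - (P *ᵥ V) s = 0) ↔ P *ᵥ r = r := by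
  obtain ⟨hγ0, hγ1⟩ := hγ
  have hdet := aux_isUnit_det P γ ⟨hγ0, hγ1⟩ hPnn hPsum
  have hmul : (1 - γ • P) * (1 - γ • P)⁻¹ = 1 := Matrix.mul_nonsing_inv _ hdet
  -- Bellman equation: V - γ • (P *ᵥ V) = r
  have hbell : (1 - γ • P) *ᵥ V = r := by
    rw [hV, Matrix.mulVec_mulVec, hmul, Matrix.one_mulVec]
  have hbell' : ∀ s, V s - γ * (P *ᵥ V) s = r s := by
    intro s
    have := congrFun hbell s
    simpa [Matrix.sub_mulVec, Matrix.one_mulVec, Matrix.smul_mulVec] using this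
  have h1γ : (1 : ℝ) - γ ≠ 0 := by linarith
  constructor
  · intro h
    have hPV : P *ᵥ V = V := by
      funext s; have := h s; linarith
    have hVr : ∀ s, (1 - γ) * V s = r s := by
      intro s
      have := hbell' s
      rw [hPV] at this
      ring_nf
      ring_nf at this
      linarith
    funext s
    have : (P *ᵥ r) s = (1 - γ) * (P *ᵥ V) s := by
      have : r = fun t => (1 - γ) * V t := by funext t; rw [← hVr t]
      rw [this]
      simp [Matrix.mulVec, dotProduct, Finset.mul_sum]
      ring_nf
      congr 1
      funext t
      ring
    rw [this, hPV, hVr s]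
  · intro h
    -- show V = (1-γ)⁻¹ • r
    have hVeq : V = (1 - γ)⁻¹ • r := by
      have hinj : Function.Injective ((1 - γ • P) *ᵥ ·) := by
        intro x y hxy
        have hmul' : (1 - γ • P)⁻¹ * (1 - γ • P) = 1 := Matrix.nonsing_inv_mul _ hdet
        have := congrArg ((1 - γ • P)⁻¹ *ᵥ ·) hxy
        simpa [Matrix.mulVec_mulVec, hmul', Matrix.one_mulVec] using this
      apply hinj
      show (1 - γ • P) *ᵥ V = (1 - γ • P) *ᵥ ((1 - γ)⁻¹ • r)
      rw [hbell, Matrix.mulVec_smul, Matrix.sub_mulVec, Matrix.one_mulVec,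
        Matrix.smul_mulVec, h]
      funext s
      simp
      field_simp
    intro s
    rw [hVeq, Matrix.mulVec_smul, h]
    simp
end

section
/- Let V : S → ℝ satisfy 0 ≤ V(s) ≤ 1/(1−γ) and the Bellman equation V = r + γ P^π V with r : S → [0,1], and suppose the dispersion factor λ = min V / max V is well defined. Then for all s, s': −(1 − λγ)/(1 − γ) ≤ ρ_r^π(s,s') ≤ max(1, (1 − λ)/(1 − γ)), where ρ_r^π(s,s') = V(s') − (P^π V)(s). In particular if λ = γ then |ρ_r^π(s,s')| ≤ 2. -/
/-! Both `V s'` and the average `∑ z, P s z * V z` lie in `[min V, max V]`, so the deviation is at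
most `max V - min V = (1 - λ) max V ≤ (1 - λ)/(1 - γ)` in absolute value. Since `λ ≥ 0` and
`γ ≤ 1`, this is below `(1 - λγ)/(1 - γ)`, and for `λ = γ` it equals `1`. -/

open Finset

theorem sum_mul_mem_Icc_of_sum_eq_one {ι : Type*} {s : Finset ι} {w f : ι → ℝ} {a b : ℝ}
    (hw : ∀ i ∈ s, 0 ≤ w i) (hsum : ∑ i ∈ s, w i = 1) (hf : ∀ i ∈ s, f i ∈ Set.Icc a b) :
    ∑ i ∈ s, w i * f i ∈ Set.Icc a b := by
  constructor
  · calc a = ∑ i ∈ s, w i * a := by rw [← sum_mul, hsum, one_mul]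
      _ ≤ ∑ i ∈ s, w i * f i :=
          sum_le_sum fun i hi => mul_le_mul_of_nonneg_left (hf i hi).1 (hw i hi)
  · calc ∑ i ∈ s, w i * f i ≤ ∑ i ∈ s, w i * b :=
          sum_le_sum fun i hi => mul_le_mul_of_nonneg_left (hf i hi).2 (hw i hi)
      _ = b := by rw [← sum_mul, hsum, one_mul]

theorem abs_sub_sum_mul_le_of_sum_eq_one {ι : Type*} [Fintype ι] {w f : ι → ℝ} {a b : ℝ}
    (hw : ∀ i, 0 ≤ w i) (hsum : ∑ i, w i = 1) (hf : ∀ i, f i ∈ Set.Icc a b) (j : ι) :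
    |f j - ∑ i, w i * f i| ≤ b - a :=
  have havg := sum_mul_mem_Icc_of_sum_eq_one (fun i _ => hw i) hsum fun i _ => hf i
  abs_sub_le_of_le_of_le (hf j).1 (hf j).2 havg.1 havg.2

/-- For `M = 0` the ratio `m / M` is the junk value `0`, and the bound still holds since `m = M`. -/
theorem sub_le_one_sub_div_div_one_sub {m M γ : ℝ} (hm : 0 ≤ m) (hmM : m ≤ M)
    (hM : M ≤ 1 / (1 - γ)) (hγ : γ < 1) :
    M - m ≤ (1 - m / M) / (1 - γ) := by
  have hratio : 0 ≤ 1 - m / M := sub_nonneg.2 (div_le_one_of_le₀ hmM (hm.trans hmM))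
  rcases (hm.trans hmM).eq_or_lt with hM0 | hM0
  · have hm0 : m = 0 := le_antisymm (hM0 ▸ hmM) hm
    rw [← hM0, hm0] at hratio ⊢
    rw [sub_zero]
    exact div_nonneg hratio (sub_nonneg.2 hγ.le)
  calc M - m = (1 - m / M) * M := by field_simp
    _ ≤ (1 - m / M) * (1 / (1 - γ)) := mul_le_mul_of_nonneg_left hM hratio
    _ = (1 - m / M) / (1 - γ) := mul_one_div _ _

theorem deviation_bounds_dispersion_general
    {S : Type*} [Fintype S]
    (P : S → S → ℝ) (V : S → ℝ) (γ : ℝ)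
    (hγ : γ ∈ Set.Ioo (0:ℝ) 1)
    (hPnn : ∀ s s', 0 ≤ P s s') (hPsum : ∀ s, ∑ s', P s s' = 1)
    (hVnn : ∀ s, 0 ≤ V s) (hVub : ∀ s, V s ≤ 1 / (1 - γ))
    (lam : ℝ) (hlam : lam = (⨅ t, V t) / (⨆ t, V t)) :
    (∀ s s' : S,
        -(1 - lam * γ) / (1 - γ) ≤ V s' - ∑ z, P s z * V z ∧
        V s' - ∑ z, P s z * V z ≤ max 1 ((1 - lam) / (1 - γ))) ∧
    (lam = γ → ∀ s s' : S, |V s' - ∑ z, P s z * V z| ≤ 2) := by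
  have hγ1 : γ < 1 := hγ.2
  have hV : ∀ s, V s ∈ Set.Icc (⨅ t, V t) (⨆ t, V t) := fun s =>
    ⟨ciInf_le (Set.finite_range V).bddBelow s, le_ciSup (Set.finite_range V).bddAbove s⟩
  have hdev : ∀ s s', |V s' - ∑ z, P s z * V z| ≤ (1 - lam) / (1 - γ) := fun s s' =>
    (abs_sub_sum_mul_le_of_sum_eq_one (hPnn s) (hPsum s) hV s').trans <| hlam ▸
      sub_le_one_sub_div_div_one_sub (Real.iInf_nonneg hVnn) ((hV s).1.trans (hV s).2)
        (Real.iSup_le hVub (hVnn s |>.trans (hVub s))) hγ1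
  have hlam0 : 0 ≤ lam := hlam ▸ div_nonneg (Real.iInf_nonneg hVnn) (Real.iSup_nonneg hVnn)
  refine ⟨fun s s' => ⟨?_, ?_⟩, fun hlamγ s s' => ?_⟩
  · calc -(1 - lam * γ) / (1 - γ) ≤ -((1 - lam) / (1 - γ)) := by
          rw [neg_div, neg_le_neg_iff]
          gcongr
          exact mul_le_of_le_one_right hlam0 hγ1.le
      _ ≤ V s' - ∑ z, P s z * V z := neg_le_of_abs_le (hdev s s')
  · exact (le_of_abs_le (hdev s s')).trans (le_max_right _ _)
  · have hone : (1 - lam) / (1 - γ) = 1 := by rw [hlamγ, div_self (by linarith)]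
    linarith [hdev s s']

/-- Bounds on the one-step value deviation in terms of the
dispersion factor `λ = min V / max V`:
`−(1 − λγ)/(1 − γ) ≤ ρ(s,s') ≤ max(1, (1 − λ)/(1 − γ))`, and if `λ = γ`
then `|ρ(s,s')| ≤ 2`. -/
theorem deviation_bounds_dispersion
    {S : Type*} [Fintype S] [Nonempty S]
    (P : S → S → ℝ) (r : S → ℝ) (V : S → ℝ) (γ : ℝ)
    (hγ : γ ∈ Set.Ioo (0:ℝ) 1)
    (hPnn : ∀ s s', 0 ≤ P s s') (hPsum : ∀ s, ∑ s', P s s' = 1)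
    (hr : ∀ s, r s ∈ Set.Icc (0:ℝ) 1)
    (hBell : ∀ s, V s = r s + γ * ∑ s', P s s' * V s')
    (hVnn : ∀ s, 0 ≤ V s) (hVub : ∀ s, V s ≤ 1 / (1 - γ))
    (hmax : 0 < ⨆ s, V s)
    (lam : ℝ) (hlam : lam = (⨅ t, V t) / (⨆ t, V t)) :
    (∀ s s' : S,
        -(1 - lam * γ) / (1 - γ) ≤ V s' - ∑ z, P s z * V z ∧
        V s' - ∑ z, P s z * V z ≤ max 1 ((1 - lam) / (1 - γ))) ∧
    (lam = γ → ∀ s s' : S, |V s' - ∑ z, P s z * V z| ≤ 2) :=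
  deviation_bounds_dispersion_general P V γ hγ hPnn hPsum hVnn hVub lam hlam
end

section
/- If two MDPs M and M' share the same reward r and satisfy ‖V_M^π − V_{M'}^π‖_∞ > 2ε, then there exists a state s such that ‖ρ_r^π(s)‖_∞ > ε(1−γ)/γ, where ρ_r^π(s,s') = V_M^π(s') − Σ_ŝ P(ŝ|s,π(s)) V_M^π(ŝ) (necessary condition for a confusing model). -/
/-- Necessary condition for a confusing model: if
`‖V_M^π − V_{M'}^π‖_∞ > 2ε` then some state has a large one-step value
deviation, `‖ρ_r^π(s)‖_∞ > ε(1−γ)/γ`. -/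
theorem confusing_model_necessary
    {S : Type*} [Fintype S] [Nonempty S]
    (P P' : S → S → ℝ) (r : S → ℝ) (V V' : S → ℝ) (γ ε : ℝ)
    (hγ : γ ∈ Set.Ioo (0:ℝ) 1) (hε : 0 < ε)
    (hPnn : ∀ s s', 0 ≤ P s s') (hPsum : ∀ s, ∑ s', P s s' = 1)
    (hP'nn : ∀ s s', 0 ≤ P' s s') (hP'sum : ∀ s, ∑ s', P' s s' = 1)
    (hr : ∀ s, r s ∈ Set.Icc (0:ℝ) 1)
    (hBell : ∀ s, V s = r s + γ * ∑ s', P s s' * V s')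
    (hBell' : ∀ s, V' s = r s + γ * ∑ s', P' s s' * V' s')
    (hΔ : 2 * ε < ⨆ s, |V s - V' s|) :
    ∃ s : S, ε * (1 - γ) / γ < ⨆ s', |V s' - ∑ z, P s z * V z| := by
  obtain ⟨hγ0, hγ1⟩ := hγ
  by_contra hcon
  push_neg at hcon
  set M := ⨆ s, |V s - V' s| with hM
  obtain ⟨s0, hs0⟩ := exists_eq_ciSup_of_finite (f := fun s => |V s - V' s|)
  have hMle : ∀ z, |V z - V' z| ≤ M := fun z =>
    le_ciSup (Set.Finite.bddAbove (Set.finite_range fun s => |V s - V' s|)) z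
  have hρ : ∀ s z, |V z - ∑ w, P s w * V w| ≤ ε * (1 - γ) / γ := fun s z =>
    le_trans (le_ciSup (Set.Finite.bddAbove (Set.finite_range fun z => |V z - ∑ w, P s w * V w|)) z) (hcon s)
  set A := ∑ w, P s0 w * V w with hA
  have h2 : A - ∑ z, P' s0 z * V' z = ∑ z, P' s0 z * (A - V' z) := by
    simp only [mul_sub]
    rw [Finset.sum_sub_distrib, ← Finset.sum_mul, hP'sum s0, one_mul]
  have h3 : |A - ∑ z, P' s0 z * V' z| ≤ ε * (1 - γ) / γ + M := by
    rw [h2]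
    calc |∑ z, P' s0 z * (A - V' z)| ≤ ∑ z, |P' s0 z * (A - V' z)| :=
          Finset.abs_sum_le_sum_abs _ _
      _ ≤ ∑ z, P' s0 z * (ε * (1 - γ) / γ + M) := by
          apply Finset.sum_le_sum; intro z _
          rw [abs_mul, abs_of_nonneg (hP'nn s0 z)]
          apply mul_le_mul_of_nonneg_left _ (hP'nn s0 z)
          have he : A - V' z = (A - V z) + (V z - V' z) := by ring
          rw [he]
          refine (abs_add_le _ _).trans (add_le_add ?_ (hMle z))
          rw [abs_sub_comm]; exact hρ s0 z
      _ = ε * (1 - γ) / γ + M := by rw [← Finset.sum_mul, hP'sum, one_mul]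
  have key : |V s0 - V' s0| ≤ ε * (1 - γ) + γ * M := by
    have h1 : V s0 - V' s0 = γ * (A - ∑ z, P' s0 z * V' z) := by
      rw [hBell s0, hBell' s0]; ring
    rw [h1, abs_mul, abs_of_pos hγ0]
    calc γ * |A - ∑ z, P' s0 z * V' z| ≤ γ * (ε * (1 - γ) / γ + M) :=
          mul_le_mul_of_nonneg_left h3 hγ0.le
      _ = ε * (1 - γ) + γ * M := by field_simp
  have hMs : M ≤ ε * (1 - γ) + γ * M := by rw [hs0, ← hM] at key; exact key
  have hMε : M ≤ ε := by nlinarith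
  linarith
end

section
/- If there exists a state s₀ with ‖ρ_r^π(s₀)‖_∞ > 2ε/γ, then there exists a transition kernel P' (absolutely continuous w.r.t. P) such that the value function of π under P' differs from that under P by more than 2ε in sup-norm: ‖V_P^π − V_{P'}^π‖_∞ > 2ε (sufficient condition for existence of a confusing model). -/
/-- Sufficient condition for the existence of a confusing model:
if `‖ρ_r^π(s₀)‖_∞ > 2ε/γ` for some state `s₀`, then there is a stochastic
kernel `P'` absolutely continuous w.r.t. `P` whose value function for the same
reward differs from `V` by more than `2ε` in sup-norm. -/
theorem confusing_model_sufficient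
    {S : Type*} [Fintype S] [Nonempty S]
    (P : S → S → ℝ) (r : S → ℝ) (V : S → ℝ) (γ ε : ℝ)
    (hγ : γ ∈ Set.Ioo (0:ℝ) 1) (hε : 0 < ε)
    (hPnn : ∀ s s', 0 ≤ P s s') (hPsum : ∀ s, ∑ s', P s s' = 1)
    (hr : ∀ s, r s ∈ Set.Icc (0:ℝ) 1)
    (hBell : ∀ s, V s = r s + γ * ∑ s', P s s' * V s')
    (s₀ : S)
    (hρ : 2 * ε / γ < ⨆ s', |V s' - ∑ z, P s₀ z * V z|) :
    ∃ (P' : S → S → ℝ) (V' : S → ℝ),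
      (∀ s s', 0 ≤ P' s s') ∧ (∀ s, ∑ s', P' s s' = 1) ∧
      (∀ s s', 0 < P s s' → 0 < P' s s') ∧
      (∀ s, V' s = r s + γ * ∑ s', P' s s' * V' s') ∧
      2 * ε < ⨆ s, |V s - V' s| := by
  classical
  obtain ⟨hγ0, hγ1⟩ := hγ
  obtain ⟨s₁, hs₁⟩ := exists_lt_of_lt_ciSup hρ
  set ρ : ℝ := V s₁ - ∑ z, P s₀ z * V z with hρdef
  have hρabs : 2 * ε / γ < |ρ| := hs₁
  have hρpos : 0 < |ρ| := lt_trans (by positivity) hρabs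
  have hγρ : 2 * ε < γ * |ρ| := by
    rw [div_lt_iff₀ hγ0] at hρabs; linarith
  set δ : ℝ := (2 * ε / (γ * |ρ|) + 1) / 2 with hδdef
  have haux : 2 * ε / (γ * |ρ|) < 1 := (div_lt_one (by positivity)).2 hγρ
  have haux0 : 0 < 2 * ε / (γ * |ρ|) := by positivity
  have hδ0 : 0 < δ := by rw [hδdef]; linarith
  have hδ1 : δ < 1 := by rw [hδdef]; linarith
  have hkey : 2 * ε < γ * δ * |ρ| := by
    have h1 : 2 * ε / (γ * |ρ|) < δ := by rw [hδdef]; linarith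
    calc 2 * ε = (2 * ε / (γ * |ρ|)) * (γ * |ρ|) := by field_simp
      _ < δ * (γ * |ρ|) := mul_lt_mul_of_pos_right h1 (by positivity)
      _ = γ * δ * |ρ| := by ring
  set P' : S → S → ℝ := fun s s' =>
    if s = s₀ then (1 - δ) * P s s' + δ * (if s' = s₁ then 1 else 0) else P s s'
    with hP'def
  have hP'nn : ∀ s s', 0 ≤ P' s s' := by
    intro s s'
    simp only [hP'def]
    split_ifs with h h'
    · have := hPnn s s'; nlinarith
    · have := hPnn s s'; nlinarith
    · exact hPnn s s'
  have hP'sum : ∀ s, ∑ s', P' s s' = 1 := by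
    intro s
    simp only [hP'def]
    split_ifs with h
    · rw [Finset.sum_add_distrib, ← Finset.mul_sum, ← Finset.mul_sum, hPsum,
        Finset.sum_ite_eq' Finset.univ s₁ (fun _ => (1:ℝ))]
      simp
    · exact hPsum s
  have hP'ac : ∀ s s', 0 < P s s' → 0 < P' s s' := by
    intro s s' hp
    simp only [hP'def]
    split_ifs with h h'
    · nlinarith
    · nlinarith
    · exact hp
  -- the Bellman operator for P'
  set T : (S → ℝ) → (S → ℝ) := fun f s => r s + γ * ∑ s', P' s s' * f s' with hTdef
  have hmono : ∀ f g : S → ℝ, f ≤ g → T f ≤ T g := by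
    intro f g hfg s
    simp only [hTdef]
    have : ∑ s', P' s s' * f s' ≤ ∑ s', P' s s' * g s' :=
      Finset.sum_le_sum fun s' _ => mul_le_mul_of_nonneg_left (hfg s') (hP'nn s s')
    nlinarith
  have hK : (⟨γ, hγ0.le⟩ : NNReal) < 1 := by
    exact hγ1
  have hlip : LipschitzWith ⟨γ, hγ0.le⟩ T := by
    apply LipschitzWith.of_dist_le_mul
    intro f g
    rw [dist_pi_le_iff (by positivity)]
    intro s
    have hsum : ∑ s', P' s s' * (f s' - g s')
        = (∑ s', P' s s' * f s') - ∑ s', P' s s' * g s' := by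
      rw [← Finset.sum_sub_distrib]
      exact Finset.sum_congr rfl fun s' _ => by ring
    have h1 : dist (T f s) (T g s) = |γ * ∑ s', P' s s' * (f s' - g s')| := by
      rw [Real.dist_eq]
      congr 1
      simp only [hTdef]
      rw [hsum]; ring
    rw [h1, abs_mul, abs_of_pos hγ0]
    have h2 : |∑ s', P' s s' * (f s' - g s')| ≤ dist f g := by
      calc |∑ s', P' s s' * (f s' - g s')| ≤ ∑ s', |P' s s' * (f s' - g s')| :=
            Finset.abs_sum_le_sum_abs _ _
        _ = ∑ s', P' s s' * |f s' - g s'| :=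
            Finset.sum_congr rfl fun s' _ => by
              rw [abs_mul, abs_of_nonneg (hP'nn s s')]
        _ ≤ ∑ s', P' s s' * dist f g := by
            apply Finset.sum_le_sum
            intro s' _
            exact mul_le_mul_of_nonneg_left
              (by rw [← Real.dist_eq]; exact dist_le_pi_dist f g s') (hP'nn s s')
        _ = dist f g := by rw [← Finset.sum_mul, hP'sum, one_mul]
    calc γ * |∑ s', P' s s' * (f s' - g s')| ≤ γ * dist f g :=
          mul_le_mul_of_nonneg_left h2 hγ0.le
      _ = (⟨γ, hγ0.le⟩ : NNReal) * dist f g := rfl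
  have hcontr : ContractingWith ⟨γ, hγ0.le⟩ T := ⟨hK, hlip⟩
  set V' : S → ℝ := ContractingWith.fixedPoint T hcontr with hV'def
  have hfix : T V' = V' := hcontr.fixedPoint_isFixedPt
  have hBell' : ∀ s, V' s = r s + γ * ∑ s', P' s s' * V' s' := by
    intro s
    conv_lhs => rw [← hfix]
  -- key computation : T V = V + γδρ at s₀
  have hTV : ∀ s, T V s = V s + (if s = s₀ then γ * δ * ρ else 0) := by
    intro s
    simp only [hTdef, hP'def]
    split_ifs with h
    · subst h
      have hsum : ∑ s', ((1 - δ) * P s s' + δ * (if s' = s₁ then 1 else 0)) * V s'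
          = (1 - δ) * (∑ z, P s z * V z) + δ * V s₁ := by
        rw [Finset.mul_sum]
        have h3 : ∑ s', (δ * (if s' = s₁ then 1 else 0)) * V s' = δ * V s₁ := by
          have h4 : ∀ s' ∈ Finset.univ, (δ * (if s' = s₁ then 1 else 0)) * V s'
              = if s' = s₁ then δ * V s' else 0 := fun s' _ => by split_ifs <;> ring
          rw [Finset.sum_congr rfl h4,
            Finset.sum_ite_eq' Finset.univ s₁ (fun s' => δ * V s')]
          simp
        rw [← h3, ← Finset.sum_add_distrib]
        exact Finset.sum_congr rfl fun s' _ => by ring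
      rw [hsum]
      simp only [hρdef]
      linear_combination -hBell s
    · rw [← hBell s]; simp
  have htend := hcontr.tendsto_iterate_fixedPoint V
  have htend1 : Filter.Tendsto (fun n => T^[n+1] V s₀) Filter.atTop (nhds (V' s₀)) := by
    have h1 : Filter.Tendsto (fun n => T^[n+1] V) Filter.atTop (nhds V') :=
      htend.comp (Filter.tendsto_add_atTop_nat 1)
    exact (tendsto_pi_nhds.mp h1) s₀
  have hmain : γ * δ * |ρ| ≤ |V s₀ - V' s₀| := by
    rcases le_or_gt 0 ρ with hsgn | hsgn
    · -- ρ ≥ 0 : V' s₀ ≥ V s₀ + γδρ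
      have hVTV : V ≤ T V := by
        intro s; rw [hTV s]; split_ifs with h
        · nlinarith
        · simp
      have hiter : ∀ n, V ≤ T^[n] V := by
        intro n
        induction n with
        | zero => simp
        | succ n ih =>
          rw [Function.iterate_succ_apply']
          exact le_trans hVTV (hmono _ _ ih)
      have hlb : ∀ n, T V s₀ ≤ T^[n+1] V s₀ := by
        intro n
        rw [Function.iterate_succ_apply']
        exact hmono _ _ (hiter n) s₀
      have h2 : T V s₀ ≤ V' s₀ := ge_of_tendsto' htend1 hlb
      rw [hTV s₀, if_pos rfl] at h2
      rw [abs_of_nonneg hsgn]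
      have h3 : -(V s₀ - V' s₀) ≤ |V s₀ - V' s₀| := neg_le_abs _
      linarith
    · -- ρ < 0 : V' s₀ ≤ V s₀ + γδρ
      have hVTV : T V ≤ V := by
        intro s; rw [hTV s]; split_ifs with h
        · nlinarith
        · simp
      have hiter : ∀ n, T^[n] V ≤ V := by
        intro n
        induction n with
        | zero => simp
        | succ n ih =>
          rw [Function.iterate_succ_apply']
          exact le_trans (hmono _ _ ih) hVTV
      have hlb : ∀ n, T^[n+1] V s₀ ≤ T V s₀ := by
        intro n
        rw [Function.iterate_succ_apply']
        exact hmono _ _ (hiter n) s₀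
      have h2 : V' s₀ ≤ T V s₀ := le_of_tendsto' htend1 hlb
      rw [hTV s₀, if_pos rfl] at h2
      rw [abs_of_neg hsgn]
      have h3 : V s₀ - V' s₀ ≤ |V s₀ - V' s₀| := le_abs_self _
      linarith
  refine ⟨P', V', hP'nn, hP'sum, hP'ac, hBell', ?_⟩
  have hbdd : BddAbove (Set.range fun s => |V s - V' s|) :=
    (Set.finite_range _).bddAbove
  calc 2 * ε < γ * δ * |ρ| := hkey
    _ ≤ |V s₀ - V' s₀| := hmain
    _ ≤ ⨆ s, |V s - V' s| := le_ciSup hbdd s₀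
end

section
/- The relaxed characteristic time upper-bounds the true one: for any distribution ω on S×A with ω(s,π(s)) > 0 for all s, inf over confusing models M' ∈ Alt_{π,r}^ε(M) of Σ_{s,a} ω(s,a) KL(P(·|s,a) ‖ P'(·|s,a)) is at least (2ε²(1−γ)²/γ²) · min_s ω(s,π(s)) / ‖ρ_r^π(s)‖_∞². -/
lemma log_le_pade {u : ℝ} (hu : 1 ≤ u) :
    Real.log u ≤ (u - 1) * (u + 5) / (2 * (2 * u + 1)) := by
  set F : ℝ → ℝ := fun u => (u - 1) * (u + 5) / (2 * (2 * u + 1)) - Real.log u with hF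
  have hder : ∀ x ∈ Set.Ici (1:ℝ), HasDerivAt F ((x - 1)^3 / (x * (2*x+1)^2)) x := by
    intro x hx
    have hxpos : (0:ℝ) < x := lt_of_lt_of_le one_pos hx
    have hd : (2 * (2 * x + 1)) ≠ 0 := by nlinarith
    have h1 : HasDerivAt (fun x : ℝ => (x - 1) * (x + 5)) ((1) * (x + 5) + (x - 1) * 1) x :=
      ((hasDerivAt_id x).sub_const 1).mul ((hasDerivAt_id x).add_const 5)
    have h2 : HasDerivAt (fun x : ℝ => 2 * (2 * x + 1)) (2 * 2) x := by
      simpa using (((hasDerivAt_id x).const_mul 2).add_const 1).const_mul 2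
    have h3 := h1.div h2 hd
    have h4 := (Real.hasDerivAt_log (ne_of_gt hxpos))
    have := h3.sub h4
    refine this.congr_deriv ?_
    field_simp
    ring
  have hmono : MonotoneOn F (Set.Ici 1) := by
    apply monotoneOn_of_deriv_nonneg (convex_Ici 1)
    · exact fun x hx => ((hder x hx).continuousAt).continuousWithinAt
    · intro x hx
      rw [interior_Ici] at hx
      exact ((hder x (Set.mem_Ici.2 (le_of_lt hx))).differentiableAt).differentiableWithinAt
    · intro x hx
      rw [interior_Ici] at hx
      rw [(hder x (Set.mem_Ici.2 (le_of_lt hx))).deriv]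
      have hxpos : (0:ℝ) < x := lt_trans one_pos hx
      have h1 : (0:ℝ) ≤ x - 1 := by linarith [Set.mem_Ioi.1 hx]
      positivity
  have h1 : F 1 ≤ F u := hmono (Set.mem_Ici.2 le_rfl) hu hu
  simp only [hF] at h1
  simp at h1
  linarith [h1]

lemma pade_le_log {x : ℝ} (hx : 1 ≤ x) :
    3 * (x^2 - 1) / (x^2 + 4*x + 1) ≤ Real.log x := by
  set F : ℝ → ℝ := fun x => Real.log x - 3 * (x^2 - 1) / (x^2 + 4*x + 1) with hF
  have hder : ∀ x ∈ Set.Ici (1:ℝ), HasDerivAt F ((x - 1)^4 / (x * (x^2+4*x+1)^2)) x := by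
    intro x hx
    have hxpos : (0:ℝ) < x := lt_of_lt_of_le one_pos hx
    have hd : (x^2 + 4*x + 1) ≠ 0 := by nlinarith
    have h1 : HasDerivAt (fun x : ℝ => 3 * (x^2 - 1)) (3 * (2*x)) x := by
      simpa using (((hasDerivAt_pow 2 x).sub_const 1).const_mul 3)
    have h2 : HasDerivAt (fun x : ℝ => x^2 + 4*x + 1) (2*x + 4) x := by
      have := ((hasDerivAt_pow 2 x).add (((hasDerivAt_id x).const_mul 4))).add_const 1
      simpa using this
    have h3 := h1.div h2 hd
    have h4 := (Real.hasDerivAt_log (ne_of_gt hxpos))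
    have := h4.sub h3
    refine this.congr_deriv ?_
    field_simp
    ring
  have hmono : MonotoneOn F (Set.Ici 1) := by
    apply monotoneOn_of_deriv_nonneg (convex_Ici 1)
    · exact fun x hx => ((hder x hx).continuousAt).continuousWithinAt
    · intro x hx
      rw [interior_Ici] at hx
      exact ((hder x (Set.mem_Ici.2 (le_of_lt hx))).differentiableAt).differentiableWithinAt
    · intro x hx
      rw [interior_Ici] at hx
      rw [(hder x (Set.mem_Ici.2 (le_of_lt hx))).deriv]
      have hxpos : (0:ℝ) < x := lt_trans one_pos hx
      positivity
  have h1 : F 1 ≤ F x := hmono (Set.mem_Ici.2 le_rfl) hx hx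
  simp only [hF] at h1
  simp at h1
  linarith [h1]

lemma kl_term_bound {p q : ℝ} (hp : 0 ≤ p) (hq : 0 ≤ q) (hpq : 0 < p → 0 < q) :
    3 * (p - q)^2 / (2 * (p + 2*q)) ≤ p * Real.log (p / q) - p + q := by
  rcases eq_or_lt_of_le hp with hp0 | hp0
  · -- p = 0
    rcases eq_or_lt_of_le hq with hq0 | hq0
    · simp [← hp0, ← hq0]
    · rw [← hp0]
      have : 3 * (0 - q)^2 / (2 * (0 + 2*q)) = 3 * q / 4 := by
        field_simp
        ring
      rw [this]
      simp
      linarith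
  · have hq0 : 0 < q := hpq hp0
    rcases le_total q p with h | h
    · -- p ≥ q, x = p/q ≥ 1
      have hx1 : 1 ≤ p / q := (one_le_div hq0).2 h
      have hlog := pade_le_log hx1
      have hmul : p * (3 * ((p/q)^2 - 1) / ((p/q)^2 + 4*(p/q) + 1)) ≤ p * Real.log (p/q) :=
        mul_le_mul_of_nonneg_left hlog hp
      have halg : p * (3 * ((p/q)^2 - 1) / ((p/q)^2 + 4*(p/q) + 1)) - p + q
            - 3 * (p - q)^2 / (2 * (p + 2*q))
          = (p - q)^4 / (2 * (p + 2*q) * (p^2 + 4*p*q + q^2)) := by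
        have h1 : (p/q)^2 + 4*(p/q) + 1 ≠ 0 := by
          have : (0:ℝ) < (p/q)^2 + 4*(p/q) + 1 := by nlinarith
          linarith
        field_simp
        ring
      nlinarith [halg, hmul, sq_nonneg ((p-q)^2),
        mul_pos (mul_pos two_pos (by linarith : (0:ℝ) < p + 2*q))
          (by nlinarith : (0:ℝ) < p^2 + 4*p*q + q^2),
        div_nonneg (by positivity : (0:ℝ) ≤ (p-q)^4)
          (by nlinarith : (0:ℝ) ≤ 2 * (p + 2*q) * (p^2 + 4*p*q + q^2))]
    · -- p ≤ q, u = q/p ≥ 1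
      have hu1 : 1 ≤ q / p := (one_le_div hp0).2 h
      have hlog := log_le_pade hu1
      have hneg : Real.log (p/q) = - Real.log (q/p) := by
        rw [← Real.log_inv]
        congr 1
        rw [inv_div]
      have hmul : p * (- ((q/p - 1) * (q/p + 5) / (2 * (2 * (q/p) + 1)))) ≤ p * Real.log (p/q) := by
        rw [hneg]
        apply mul_le_mul_of_nonneg_left _ hp
        linarith
      have halg : p * (- ((q/p - 1) * (q/p + 5) / (2 * (2 * (q/p) + 1)))) - p + q
          = 3 * (p - q)^2 / (2 * (p + 2*q)) := by
        have h1 : 2 * (2 * (q/p) + 1) ≠ 0 := by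
          have : (0:ℝ) < 2 * (q/p) + 1 := by positivity
          linarith
        field_simp
        ring
      linarith [hmul, halg]

open Finset in
lemma finset_pinsker {ι : Type*} [Fintype ι] (p q : ι → ℝ)
    (hp : ∀ i, 0 ≤ p i) (hq : ∀ i, 0 ≤ q i)
    (hps : ∑ i, p i = 1) (hqs : ∑ i, q i = 1)
    (hac : ∀ i, 0 < p i → 0 < q i) :
    (∑ i, |p i - q i|)^2 ≤ 2 * ∑ i, p i * Real.log (p i / q i) := by
  set t : ι → ℝ := fun i => 3 * (p i - q i)^2 / (2 * (p i + 2 * q i)) with ht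
  have htnn : ∀ i, 0 ≤ t i := fun i => by
    apply div_nonneg (by positivity)
    have := hp i; have := hq i; linarith
  have hK : ∑ i, t i ≤ ∑ i, p i * Real.log (p i / q i) := by
    have : ∑ i, p i * Real.log (p i / q i)
        = ∑ i, (p i * Real.log (p i / q i) - p i + q i) := by
      rw [Finset.sum_add_distrib, Finset.sum_sub_distrib, hps, hqs]
      ring
    rw [this]
    exact Finset.sum_le_sum fun i _ => kl_term_bound (hp i) (hq i) (hac i)
  have hKnn : 0 ≤ ∑ i, t i := Finset.sum_nonneg fun i _ => htnn i
  classical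
  set T : Finset ι := univ.filter (fun i => 0 < p i + 2 * q i) with hT
  have hA : ∑ i, |p i - q i| = ∑ i ∈ T, |p i - q i| := by
    rw [← Finset.sum_subset (Finset.subset_univ T)]
    intro i _ hiT
    simp only [hT, Finset.mem_filter, Finset.mem_univ, true_and, not_lt] at hiT
    have h1 := hp i; have h2 := hq i
    have hpi : p i = 0 := by linarith
    have hqi : q i = 0 := by linarith
    simp [hpi, hqi]
  rcases T.eq_empty_or_nonempty with hTe | hTne
  · rw [hA, hTe]
    simp
    linarith
  · set g : ι → ℝ := fun i => 2 * (p i + 2 * q i) / 3 with hg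
    have hgpos : ∀ i ∈ T, 0 < g i := by
      intro i hi
      simp only [hT, Finset.mem_filter] at hi
      have := hi.2
      positivity
    have hCS := Finset.sq_sum_div_le_sum_sq_div T (fun i => |p i - q i|) hgpos
    have hterm : ∀ i ∈ T, |p i - q i|^2 / g i = t i := by
      intro i hi
      have h := (hgpos i hi)
      have hd : p i + 2 * q i ≠ 0 := by
        simp only [hT, Finset.mem_filter] at hi
        linarith [hi.2]
      rw [sq_abs]
      simp only [hg, ht]
      field_simp
    rw [Finset.sum_congr rfl hterm] at hCS
    have hTt : ∑ i ∈ T, t i ≤ ∑ i, t i :=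
      Finset.sum_le_sum_of_subset_of_nonneg (Finset.subset_univ T)
        (fun i _ _ => htnn i)
    have hgnn : ∀ i, 0 ≤ g i := by
      intro i
      have := hp i; have := hq i
      simp only [hg]
      positivity
    have hB : ∑ i ∈ T, g i ≤ 2 := by
      have hall : ∑ i, g i = 2 := by
        have h1 : ∀ i ∈ univ, g i = 2/3 * p i + 4/3 * q i := by
          intro i _
          simp only [hg]; ring
        rw [Finset.sum_congr rfl h1, Finset.sum_add_distrib, ← Finset.mul_sum,
          ← Finset.mul_sum, hps, hqs]
        norm_num
      rw [← hall]
      exact Finset.sum_le_sum_of_subset_of_nonneg (Finset.subset_univ T)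
        (fun i _ _ => hgnn i)
    have hBpos : 0 < ∑ i ∈ T, g i :=
      Finset.sum_pos hgpos hTne
    rw [div_le_iff₀ hBpos] at hCS
    rw [hA]
    calc (∑ i ∈ T, |p i - q i|)^2 ≤ (∑ i ∈ T, t i) * (∑ i ∈ T, g i) := hCS
      _ ≤ (∑ i, t i) * 2 := by
          apply mul_le_mul hTt hB hBpos.le hKnn
      _ ≤ 2 * ∑ i, p i * Real.log (p i / q i) := by linarith [hK]

lemma kl_nonneg {ι : Type*} [Fintype ι] (p q : ι → ℝ)
    (hp : ∀ i, 0 ≤ p i) (hq : ∀ i, 0 ≤ q i)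
    (hps : ∑ i, p i = 1) (hqs : ∑ i, q i = 1)
    (hac : ∀ i, 0 < p i → 0 < q i) :
    0 ≤ ∑ i, p i * Real.log (p i / q i) := by
  have := finset_pinsker p q hp hq hps hqs hac
  nlinarith [sq_nonneg (∑ i, |p i - q i|)]

/-- The relaxed characteristic time upper-bounds the true one:
for any distribution `ω` on `S × A` with `ω(s, π(s)) > 0`, every confusing
model `M' ∈ Alt_{π,r}^ε(M)` satisfies
`Σ_{s,a} ω(s,a) KL(P(·|s,a)‖P'(·|s,a)) ≥ (2ε²(1−γ)²/γ²) min_s ω(s,π(s))/‖ρ_r^π(s)‖_∞²`. -/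
theorem relaxed_characteristic_time_bound
    {S A : Type*} [Fintype S] [Fintype A] [Nonempty S]
    (P : S → A → S → ℝ) (pi : S → A) (r : S → ℝ) (V : S → ℝ) (γ ε : ℝ)
    (hγ : γ ∈ Set.Ioo (0:ℝ) 1) (hε : 0 < ε)
    (hPnn : ∀ s a s', 0 ≤ P s a s') (hPsum : ∀ s a, ∑ s', P s a s' = 1)
    (hr : ∀ s, r s ∈ Set.Icc (0:ℝ) 1)
    (hBell : ∀ s, V s = r s + γ * ∑ s', P s (pi s) s' * V s')
    (hρpos : ∀ s : S, 0 < ⨆ s', |V s' - ∑ z, P s (pi s) z * V z|)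
    (ω : S → A → ℝ) (hωnn : ∀ s a, 0 ≤ ω s a)
    (hωsum : ∑ s, ∑ a, ω s a = 1)
    (hωpos : ∀ s, 0 < ω s (pi s)) :
    ∀ (P' : S → A → S → ℝ) (V' : S → ℝ),
      (∀ s a s', 0 ≤ P' s a s') → (∀ s a, ∑ s', P' s a s' = 1) →
      (∀ s a s', 0 < P s a s' → 0 < P' s a s') →
      (∀ s, V' s = r s + γ * ∑ s', P' s (pi s) s' * V' s') →
      2 * ε < (⨆ s, |V s - V' s|) →
      (2 * ε ^ 2 * (1 - γ) ^ 2 / γ ^ 2) *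
          ⨅ s, ω s (pi s) / (⨆ s', |V s' - ∑ z, P s (pi s) z * V z|) ^ 2
        ≤ ∑ s, ∑ a, ω s a *
            ∑ s', P s a s' * Real.log (P s a s' / P' s a s') := by
  intro P' V' hP'nn hP'sum hac hBell' hgap
  obtain ⟨hγ0, hγ1⟩ := hγ
  -- maximizer of |V - V'|
  obtain ⟨s0, hs0⟩ := Finite.exists_max (fun s => |V s - V' s|)
  have hsup_le : (⨆ s, |V s - V' s|) ≤ |V s0 - V' s0| := ciSup_le hs0
  have hM : 2 * ε < |V s0 - V' s0| := lt_of_lt_of_le hgap hsup_le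
  set p : S → ℝ := fun s' => P s0 (pi s0) s' with hpdef
  set q : S → ℝ := fun s' => P' s0 (pi s0) s' with hqdef
  set c : ℝ := ∑ z, P s0 (pi s0) z * V z with hcdef
  set X : ℝ := ∑ s', (p s' - q s') * V s' with hXdef
  set R0 : ℝ := ⨆ s', |V s' - c| with hR0def
  have hR0 : 0 < R0 := hρpos s0
  -- Bellman difference
  have hdiff : V s0 - V' s0 = γ * (X + ∑ s', q s' * (V s' - V' s')) := by
    rw [hBell s0, hBell' s0, hXdef]
    have : ∑ s', (p s' - q s') * V s' + ∑ s', q s' * (V s' - V' s')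
        = ∑ s', P s0 (pi s0) s' * V s' - ∑ s', P' s0 (pi s0) s' * V' s' := by
      rw [← Finset.sum_add_distrib, ← Finset.sum_sub_distrib]
      exact Finset.sum_congr rfl fun s' _ => by simp only [hpdef, hqdef]; ring
    rw [this]
    ring
  -- bound the second term
  have hY : |∑ s', q s' * (V s' - V' s')| ≤ |V s0 - V' s0| := by
    calc |∑ s', q s' * (V s' - V' s')| ≤ ∑ s', |q s' * (V s' - V' s')| :=
          Finset.abs_sum_le_sum_abs _ _
      _ ≤ ∑ s', q s' * |V s0 - V' s0| := by
          apply Finset.sum_le_sum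
          intro s' _
          rw [abs_mul, abs_of_nonneg (hP'nn s0 (pi s0) s')]
          exact mul_le_mul_of_nonneg_left (hs0 s') (hP'nn s0 (pi s0) s')
      _ = |V s0 - V' s0| := by rw [← Finset.sum_mul, hP'sum s0 (pi s0), one_mul]
  have hXlb : (1 - γ) * |V s0 - V' s0| ≤ γ * |X| := by
    have h1 : |V s0 - V' s0| ≤ γ * (|X| + |V s0 - V' s0|) := by
      calc |V s0 - V' s0| = γ * |X + ∑ s', q s' * (V s' - V' s')| := by
            rw [hdiff, abs_mul, abs_of_nonneg hγ0.le]
        _ ≤ γ * (|X| + |∑ s', q s' * (V s' - V' s')|) :=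
            mul_le_mul_of_nonneg_left (abs_add_le _ _) hγ0.le
        _ ≤ γ * (|X| + |V s0 - V' s0|) := by nlinarith [hY]
    nlinarith [h1]
  -- rewrite X using centered values
  have hsum0 : ∑ s', (p s' - q s') = 0 := by
    rw [Finset.sum_sub_distrib]
    simp only [hpdef, hqdef]
    rw [hPsum s0 (pi s0), hP'sum s0 (pi s0)]
    ring
  have hXc : X = ∑ s', (p s' - q s') * (V s' - c) := by
    rw [hXdef]
    have : ∑ s', (p s' - q s') * (V s' - c)
        = ∑ s', (p s' - q s') * V s' - (∑ s', (p s' - q s')) * c := by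
      rw [Finset.sum_mul, ← Finset.sum_sub_distrib]
      exact Finset.sum_congr rfl fun s' _ => by ring
    rw [this, hsum0]
    ring
  have hbdd : BddAbove (Set.range fun s' => |V s' - c|) :=
    Set.Finite.bddAbove (Set.finite_range _)
  have hXub : |X| ≤ R0 * ∑ s', |p s' - q s'| := by
    rw [hXc]
    calc |∑ s', (p s' - q s') * (V s' - c)| ≤ ∑ s', |(p s' - q s') * (V s' - c)| :=
          Finset.abs_sum_le_sum_abs _ _
      _ ≤ ∑ s', |p s' - q s'| * R0 := by
          apply Finset.sum_le_sum
          intro s' _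
          rw [abs_mul]
          exact mul_le_mul_of_nonneg_left (le_ciSup hbdd s') (abs_nonneg _)
      _ = R0 * ∑ s', |p s' - q s'| := by rw [← Finset.sum_mul]; ring
  -- Pinsker at (s0, pi s0)
  set KL0 : ℝ := ∑ s', p s' * Real.log (p s' / q s') with hKL0def
  have hpinsker : (∑ s', |p s' - q s'|)^2 ≤ 2 * KL0 :=
    finset_pinsker p q (fun s' => hPnn s0 (pi s0) s') (fun s' => hP'nn s0 (pi s0) s')
      (hPsum s0 (pi s0)) (hP'sum s0 (pi s0)) (fun s' => hac s0 (pi s0) s')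
  -- main numeric bound on KL0
  have hKL0 : 2 * ε ^ 2 * (1 - γ) ^ 2 / γ ^ 2 / R0 ^ 2 ≤ KL0 := by
    set L : ℝ := ∑ s', |p s' - q s'| with hLdef
    have hLnn : 0 ≤ L := Finset.sum_nonneg fun s' _ => abs_nonneg _
    have h1 : 2 * ε * (1 - γ) < γ * |X| := by nlinarith [hXlb, hM]
    have h2 : 2 * ε * (1 - γ) < γ * (R0 * L) :=
      h1.trans_le (mul_le_mul_of_nonneg_left hXub hγ0.le)
    have h2nn : 0 ≤ 2 * ε * (1 - γ) := by nlinarith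
    have h3 : (2 * ε * (1 - γ)) * (2 * ε * (1 - γ)) < (γ * (R0 * L)) * (γ * (R0 * L)) :=
      mul_self_lt_mul_self h2nn h2
    have h4 : γ^2 * R0^2 * L^2 ≤ γ^2 * R0^2 * (2 * KL0) :=
      mul_le_mul_of_nonneg_left hpinsker (by positivity)
    rw [div_le_iff₀ (by positivity : (0:ℝ) < R0^2), div_le_iff₀ (by positivity : (0:ℝ) < γ^2)]
    nlinarith [h3, h4]
  -- KL nonneg for every (s,a)
  have hklnn : ∀ s a, 0 ≤ ∑ s', P s a s' * Real.log (P s a s' / P' s a s') := by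
    intro s a
    exact kl_nonneg _ _ (fun s' => hPnn s a s') (fun s' => hP'nn s a s')
      (hPsum s a) (hP'sum s a) (fun s' => hac s a s')
  -- pick out the (s0, pi s0) term
  have hpick : ω s0 (pi s0) * KL0
      ≤ ∑ s, ∑ a, ω s a * ∑ s', P s a s' * Real.log (P s a s' / P' s a s') := by
    have hinner : ∀ s, 0 ≤ ∑ a, ω s a * ∑ s', P s a s' * Real.log (P s a s' / P' s a s') :=
      fun s => Finset.sum_nonneg fun a _ => mul_nonneg (hωnn s a) (hklnn s a)
    have h1 : ω s0 (pi s0) * KL0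
        ≤ ∑ a, ω s0 a * ∑ s', P s0 a s' * Real.log (P s0 a s' / P' s0 a s') := by
      have := Finset.single_le_sum
        (f := fun a => ω s0 a * ∑ s', P s0 a s' * Real.log (P s0 a s' / P' s0 a s'))
        (fun a _ => mul_nonneg (hωnn s0 a) (hklnn s0 a)) (Finset.mem_univ (pi s0))
      exact this
    refine h1.trans ?_
    exact Finset.single_le_sum
      (f := fun s => ∑ a, ω s a * ∑ s', P s a s' * Real.log (P s a s' / P' s a s'))
      (fun s _ => hinner s) (Finset.mem_univ s0)
  -- infimum step
  have hCnn : 0 ≤ 2 * ε ^ 2 * (1 - γ) ^ 2 / γ ^ 2 := by positivity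
  have hbddb : BddBelow (Set.range fun s =>
      ω s (pi s) / (⨆ s', |V s' - ∑ z, P s (pi s) z * V z|) ^ 2) :=
    Set.Finite.bddBelow (Set.finite_range _)
  have hinf : (⨅ s, ω s (pi s) / (⨆ s', |V s' - ∑ z, P s (pi s) z * V z|) ^ 2)
      ≤ ω s0 (pi s0) / R0 ^ 2 := ciInf_le hbddb s0
  calc (2 * ε ^ 2 * (1 - γ) ^ 2 / γ ^ 2) *
        ⨅ s, ω s (pi s) / (⨆ s', |V s' - ∑ z, P s (pi s) z * V z|) ^ 2
      ≤ (2 * ε ^ 2 * (1 - γ) ^ 2 / γ ^ 2) * (ω s0 (pi s0) / R0 ^ 2) :=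
        mul_le_mul_of_nonneg_left hinf hCnn
    _ = ω s0 (pi s0) * (2 * ε ^ 2 * (1 - γ) ^ 2 / γ ^ 2 / R0 ^ 2) := by ring
    _ ≤ ω s0 (pi s0) * KL0 := mul_le_mul_of_nonneg_left hKL0 (hωnn s0 (pi s0))
    _ ≤ _ := hpick
end

section
/- Stationary distribution lower bound under a mixed policy: let π = (1−ε)π_tgt + ε π_u be a mixture of a target policy with the uniform policy, ε ∈ (0,1], and let P_u be the state transition matrix under the uniform policy. If η_k = min_{s,s'} P_u^k(s'|s) > 0 for some k₀, then any stationary distribution d of the chain induced by π satisfies d(s) ≥ ε^{k₀} η_{k₀} for all states s. -/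
/-!
Every action keeps probability at least `ε / |A|` under the mixed policy, so `P_π ≥ ε P_u`
entrywise. Applying `d = d P_π` `k₀` times and dropping the nonnegative excess at each step gives
`d ≥ ε^{k₀} d P_u^{k₀}`, and every entry of `d P_u^{k₀}` is a convex combination of entries of
`P_u^{k₀}`, hence at least `η_{k₀}`.
-/

open Matrix

namespace Matrix

variable {n : Type*} [Fintype n]

lemma vecMul_le_vecMul_of_nonneg_right {u v : n → ℝ} {M : Matrix n n ℝ} (huv : u ≤ v)
    (hM : ∀ i j, 0 ≤ M i j) : u ᵥ* M ≤ v ᵥ* M :=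
  fun j => dotProduct_le_dotProduct_of_nonneg_right huv fun i => hM i j

lemma vecMul_le_vecMul_of_nonneg_left {v : n → ℝ} {M N : Matrix n n ℝ} (hv : 0 ≤ v)
    (hMN : ∀ i j, M i j ≤ N i j) : v ᵥ* M ≤ v ᵥ* N :=
  fun j => dotProduct_le_dotProduct_of_nonneg_left (fun i => hMN i j) hv

lemma le_vecMul_of_le_apply {v : n → ℝ} {M : Matrix n n ℝ} {η : ℝ} (hv : 0 ≤ v)
    (hv1 : ∑ i, v i = 1) (j : n) (hη : ∀ i, η ≤ M i j) : η ≤ (v ᵥ* M) j :=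
  calc η = ∑ i, v i * η := by rw [← Finset.sum_mul, hv1, one_mul]
    _ ≤ ∑ i, v i * M i j := by gcongr with i; exacts [hv i, hη i]

lemma pow_smul_vecMul_pow_le [DecidableEq n] {v : n → ℝ} {M Q : Matrix n n ℝ} {c : ℝ}
    (hc : 0 ≤ c) (hM : ∀ i j, 0 ≤ M i j) (hMQ : ∀ i j, c * M i j ≤ Q i j) (hv : 0 ≤ v)
    (hvQ : v ᵥ* Q ≤ v) (k : ℕ) : c ^ k • (v ᵥ* M ^ k) ≤ v := by
  induction k with
  | zero => simp
  | succ k ih =>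
    have hcM : ∀ i j, 0 ≤ (c • M) i j := fun i j => mul_nonneg hc (hM i j)
    calc c ^ (k + 1) • (v ᵥ* M ^ (k + 1)) = (c ^ k • (v ᵥ* M ^ k)) ᵥ* (c • M) := by
          rw [smul_vecMul, vecMul_smul, vecMul_vecMul, ← pow_succ, smul_smul, ← pow_succ]
      _ ≤ v ᵥ* (c • M) := vecMul_le_vecMul_of_nonneg_right ih hcM
      _ ≤ v ᵥ* Q := vecMul_le_vecMul_of_nonneg_left hv hMQ
      _ ≤ v := hvQ

end Matrix

lemma mul_uniform_le_mixed {S A : Type*} [Fintype A] (P : S → A → S → ℝ) (πtgt : S → A → ℝ)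
    {ε : ℝ} (hε1 : ε ≤ 1) (hP : ∀ s a s', 0 ≤ P s a s')
    (hπ : ∀ s a, 0 ≤ πtgt s a) (s s' : S) :
    ε * ((1 / (Fintype.card A : ℝ)) * ∑ a, P s a s') ≤
      ∑ a, ((1 - ε) * πtgt s a + ε / (Fintype.card A : ℝ)) * P s a s' := by
  rw [← mul_assoc, mul_one_div, Finset.mul_sum]
  gcongr with a
  · exact hP s a s'
  · exact le_add_of_nonneg_left (mul_nonneg (by linarith) (hπ s a))

theorem stationary_lower_bound_mixed_policy_general
    {S A : Type*} [Fintype S] [DecidableEq S] [Fintype A]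
    (P : S → A → S → ℝ) (πtgt : S → A → ℝ) (ε : ℝ) (k₀ : ℕ)
    (hε : ε ∈ Set.Ioc (0:ℝ) 1)
    (hPnn : ∀ s a s', 0 ≤ P s a s')
    (hπnn : ∀ s a, 0 ≤ πtgt s a)
    (Pu : Matrix S S ℝ)
    (hPu : ∀ s s', Pu s s' = (1 / (Fintype.card A : ℝ)) * ∑ a, P s a s')
    (Pπ : S → S → ℝ)
    (hPπ : ∀ s s', Pπ s s' =
      ∑ a, ((1 - ε) * πtgt s a + ε / (Fintype.card A : ℝ)) * P s a s')
    (d : S → ℝ) (hdnn : ∀ s, 0 ≤ d s) (hdsum : ∑ s, d s = 1)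
    (hstat : ∀ s', d s' = ∑ s, d s * Pπ s s')
    (η : ℝ) (hη : η = ⨅ p : S × S, (Pu ^ k₀) p.1 p.2) :
    ∀ s : S, ε ^ k₀ * η ≤ d s := by
  intro s
  have hε0 : 0 ≤ ε := hε.1.le
  have hPu_nonneg : ∀ s s', 0 ≤ Pu s s' := fun s s' => by
    rw [hPu]; exact mul_nonneg (by positivity) (Finset.sum_nonneg fun a _ => hPnn s a s')
  have hdom : ∀ s s', ε * Pu s s' ≤ Pπ s s' := fun s s' => by
    rw [hPu, hPπ]; exact mul_uniform_le_mixed P πtgt hε.2 hPnn hπnn s s'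
  have hη_le : ∀ t, η ≤ (Pu ^ k₀) t s := fun t => by
    rw [hη]; exact ciInf_le (Finite.bddBelow_range _) (t, s)
  calc ε ^ k₀ * η ≤ ε ^ k₀ * (d ᵥ* Pu ^ k₀) s :=
        mul_le_mul_of_nonneg_left (le_vecMul_of_le_apply hdnn hdsum s hη_le) (pow_nonneg hε0 _)
    _ ≤ d s := pow_smul_vecMul_pow_le hε0 hPu_nonneg hdom hdnn
        (fun s' => (hstat s').ge) k₀ s

/-- Stationary distribution lower bound under a mixed policy
`π = (1−ε)π_tgt + ε π_u`: if `η_{k₀} = min_{s,s'} P_u^{k₀}(s'|s) > 0`, then any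
stationary distribution `d` of the chain induced by `π` satisfies
`d(s) ≥ ε^{k₀} η_{k₀}` for all `s`. -/
theorem stationary_lower_bound_mixed_policy
    {S A : Type*} [Fintype S] [DecidableEq S] [Fintype A] [Nonempty S] [Nonempty A]
    (P : S → A → S → ℝ) (πtgt : S → A → ℝ) (ε : ℝ) (k₀ : ℕ)
    (hε : ε ∈ Set.Ioc (0:ℝ) 1)
    (hPnn : ∀ s a s', 0 ≤ P s a s') (hPsum : ∀ s a, ∑ s', P s a s' = 1)
    (hπnn : ∀ s a, 0 ≤ πtgt s a) (hπsum : ∀ s, ∑ a, πtgt s a = 1)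
    (Pu : Matrix S S ℝ)
    (hPu : ∀ s s', Pu s s' = (1 / (Fintype.card A : ℝ)) * ∑ a, P s a s')
    (Pπ : S → S → ℝ)
    (hPπ : ∀ s s', Pπ s s' =
      ∑ a, ((1 - ε) * πtgt s a + ε / (Fintype.card A : ℝ)) * P s a s')
    (d : S → ℝ) (hdnn : ∀ s, 0 ≤ d s) (hdsum : ∑ s, d s = 1)
    (hstat : ∀ s', d s' = ∑ s, d s * Pπ s s')
    (η : ℝ) (hη : η = ⨅ p : S × S, (Pu ^ k₀) p.1 p.2) (hηpos : 0 < η) :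
    ∀ s : S, ε ^ k₀ * η ≤ d s :=
  stationary_lower_bound_mixed_policy_general P πtgt ε k₀ hε hPnn hπnn Pu hPu Pπ hPπ d hdnn hdsum
    hstat η hη
end
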